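/- For any graph G and any l ≥ 0 the graph μ_l(G) × K₂ is isomorphic to the graph H obtained from G × P_{2l+2} by adding two new vertices x and y, with x adjacent exactly to V(G) × {1} and y adjacent exactly to V(G) × {2l+2}. -/

import Mathlib

/-- The categorical (tensor) product of two simple graphs. -/
def tensorG {V W : Type} (G : SimpleGraph V) (H : SimpleGraph W) : SimpleGraph (V × W) where
  Adj a b := G.Adj a.1 b.1 ∧ H.Adj a.2 b.2
  symm := ⟨fun _ _ h => ⟨h.1.symm, h.2.symm⟩⟩
  loopless := ⟨fun a h => G.loopless.irrefl a.1 h.1⟩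

/-- The complete graph on two vertices. -/
def K2 : SimpleGraph (Fin 2) := SimpleGraph.completeGraph (Fin 2)

/-- The generalized Mycielskian `μ_l(G)`.  The vertex `none` is the apex `w`; the layer
`V × {i}` of the paper corresponds to the vertices `some (v, i-1)`, the top layer
(the copy of `G`) being `some (v, l)`. -/
def myc {V : Type} (l : ℕ) (G : SimpleGraph V) : SimpleGraph (Option (V × Fin (l+1))) where
  Adj a b :=
    match a, b with
    | some p, some q => G.Adj p.1 q.1 ∧
        ((p.2.val + 1 = q.2.val ∨ q.2.val + 1 = p.2.val) ∨ (p.2.val = q.2.val ∧ p.2.val = l))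
    | some p, none => p.2.val = 0
    | none, some q => q.2.val = 0
    | none, none => False
  symm := by
    constructor
    rintro (_|p) (_|q) h <;> simp_all
    exact ⟨h.1.symm, by omega⟩
  loopless := by
    constructor
    rintro (_|p) h
    · exact h
    · exact SimpleGraph.irrefl _ h.1

/-- The graph `H` obtained from `G × P_{2l+2}` by adding two vertices `x = Sum.inr 0` and
`y = Sum.inr 1`, with `x` adjacent exactly to the layer `V × {1}` (here index `0`) and `y`
adjacent exactly to the layer `V × {2l+2}` (here index `2l+1`).  The `inl`-part is the
tensor product of `G` with the path on `2l+2` vertices. -/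
def coverAux {V : Type} (l : ℕ) (G : SimpleGraph V) :
    SimpleGraph ((V × Fin (2*l+2)) ⊕ Fin 2) where
  Adj a b :=
    match a, b with
    | .inl p, .inl q => G.Adj p.1 q.1 ∧ (p.2.val + 1 = q.2.val ∨ q.2.val + 1 = p.2.val)
    | .inl p, .inr i => (i = 0 ∧ p.2.val = 0) ∨ (i = 1 ∧ p.2.val = 2*l+1)
    | .inr i, .inl p => (i = 0 ∧ p.2.val = 0) ∨ (i = 1 ∧ p.2.val = 2*l+1)
    | .inr _, .inr _ => False
  symm := by constructor; rintro (p|i) (q|j) h <;> simp_all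
             exact ⟨h.1.symm, h.2.symm⟩
  loopless := by
    constructor
    rintro (p|i) h
    · exact SimpleGraph.irrefl _ h.1
    · exact h

/-!
Folding the path `P_{2l+2}` in the middle shows that it is the Kronecker double cover of
`P_{l+1}` with a loop at its last vertex: the vertex `(i, e)` of the cover goes to `i` or to its
mirror image `2l+1-i`, whichever has parity `e`. Taking the tensor product with `G`, the layers of
`μ_l(G) × K₂` are exactly `G × P_{2l+2}`, the loop accounting for the copy of `G` on top; the two
copies of the apex, joined to the two copies of the bottom layer, become `x` and `y`.
-/

def pathFoldEquiv (l : ℕ) : Fin (l+1) × Fin 2 ≃ Fin (2*l+2) where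
  toFun p := if (p.1.val + p.2.val) % 2 = 0 then ⟨p.1, by omega⟩ else ⟨2*l+1 - p.1, by omega⟩
  invFun k := (⟨min k (2*l+1 - k), by omega⟩, ⟨k % 2, by omega⟩)
  left_inv := by
    rintro ⟨i, e⟩
    have := e.isLt
    dsimp only
    split_ifs <;> ext <;> dsimp only <;> omega
  right_inv := by
    intro k
    dsimp only
    split_ifs <;> ext <;> dsimp only at * <;> omega

section pathFoldEquiv

variable {l : ℕ}

lemma pathFoldEquiv_val (i : Fin (l+1)) (e : Fin 2) :
    (pathFoldEquiv l (i, e)).val =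
      if (i.val + e.val) % 2 = 0 then i.val else 2*l+1 - i.val :=
  apply_ite Fin.val _ _ _

lemma pathFoldEquiv_val_eq_zero_iff (i : Fin (l+1)) (e : Fin 2) :
    (pathFoldEquiv l (i, e)).val = 0 ↔ i.val = 0 ∧ e.val = 0 := by
  have := i.isLt
  rw [pathFoldEquiv_val]
  split_ifs <;> omega

lemma pathFoldEquiv_val_eq_last_iff (i : Fin (l+1)) (e : Fin 2) :
    (pathFoldEquiv l (i, e)).val = 2*l+1 ↔ i.val = 0 ∧ e.val = 1 := by
  have := i.isLt
  have := e.isLt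
  rw [pathFoldEquiv_val]
  split_ifs <;> omega

lemma pathGraph_adj_pathFoldEquiv_iff (i j : Fin (l+1)) (e f : Fin 2) :
    (SimpleGraph.pathGraph (2*l+2)).Adj (pathFoldEquiv l (i, e)) (pathFoldEquiv l (j, f)) ↔
      ((SimpleGraph.pathGraph (l+1)).Adj i j ∨ (i = j ∧ i.val = l)) ∧ e ≠ f := by
  have := i.isLt
  have := j.isLt
  have := e.isLt
  have := f.isLt
  simp only [SimpleGraph.pathGraph_adj, pathFoldEquiv_val, Fin.ext_iff, ne_eq]
  split_ifs <;> omega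

end pathFoldEquiv

def mycTensorK2Equiv {V : Type} (l : ℕ) :
    Option (V × Fin (l+1)) × Fin 2 ≃ (V × Fin (2*l+2)) ⊕ Fin 2 where
  toFun
    | (none, e) => .inr e.rev
    | (some (v, i), e) => .inl (v, pathFoldEquiv l (i, e))
  invFun
    | .inr j => (none, j.rev)
    | .inl (v, k) => (some (v, ((pathFoldEquiv l).symm k).1), ((pathFoldEquiv l).symm k).2)
  left_inv := by rintro ⟨_ | ⟨v, i⟩, e⟩ <;> simp
  right_inv := by rintro (⟨v, k⟩ | j) <;> simp

/-- The Kronecker double cover of the `l`-Mycielskian of `G` is isomorphic to the graph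
`H` of the paper. -/
theorem stmt13 {V : Type} (l : ℕ) (G : SimpleGraph V) :
    Nonempty (tensorG (myc l G) K2 ≃g coverAux l G) := by
  refine ⟨⟨mycTensorK2Equiv l, ?_⟩⟩
  rintro ⟨_ | ⟨v, i⟩, e⟩ ⟨_ | ⟨u, j⟩, f⟩ <;>
    simp only [mycTensorK2Equiv, Equiv.coe_fn_mk, tensorG, myc, coverAux, K2,
      SimpleGraph.completeGraph, SimpleGraph.top_adj, pathFoldEquiv_val_eq_zero_iff,
      pathFoldEquiv_val_eq_last_iff, ← SimpleGraph.pathGraph_adj, Fin.val_inj]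
  · simp
  · fin_cases e <;> fin_cases f <;> simp
  · fin_cases e <;> fin_cases f <;> simp
  · rw [pathGraph_adj_pathFoldEquiv_iff, and_assoc]
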